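/- arXiv:2110.07338 — 8 statements merged into one kernel-verified Lean document; each statement's English description precedes it below -/
import Mathlib

section
/- Let n be a unit vector in ℝ³ and let v, a ∈ ℝ³ with 1 + n·v ≠ 0. Then n·a = (((1 − ‖v‖²)/(1 + n·v))·n + v)·a + (v · (n × ((n + v) × a)))/(1 + n·v). -/
/-! By the BAC–CAB rule and `‖n‖ = 1`,
`v · (n × ((n + v) × a)) = (n·a)(n·v + ‖v‖²) − (1 + n·v)(v·a)`. Dividing by `1 + n·v`, the
`v·a` terms cancel against the `v` in `R̂`, and the coefficients of `n·a` add up to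
`(1 − ‖v‖² + n·v + ‖v‖²)/(1 + n·v) = 1`. -/

noncomputable def cross3 (a b : EuclideanSpace ℝ (Fin 3)) : EuclideanSpace ℝ (Fin 3) :=
  (WithLp.equiv 2 (Fin 3 → ℝ)).symm
    (crossProduct ((WithLp.equiv 2 (Fin 3 → ℝ)) a) ((WithLp.equiv 2 (Fin 3 → ℝ)) b))

open RealInnerProductSpace

theorem cross3_cross3_eq_smul_sub_smul (u v w : EuclideanSpace ℝ (Fin 3)) :
    cross3 u (cross3 v w) = ⟪u, w⟫ • v - ⟪u, v⟫ • w := by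
  ext i
  simp [cross3, cross_cross_eq_smul_sub_smul', EuclideanSpace.inner_eq_star_dotProduct,
    dotProduct_comm]

theorem inner_cross3_cross3_add_of_norm_eq_one {n : EuclideanSpace ℝ (Fin 3)} (hn : ‖n‖ = 1)
    (v a : EuclideanSpace ℝ (Fin 3)) :
    ⟪v, cross3 n (cross3 (n + v) a)⟫ = ⟪n, a⟫ * (⟪n, v⟫ + ‖v‖ ^ 2) - (1 + ⟪n, v⟫) * ⟪v, a⟫ := by
  rw [cross3_cross3_eq_smul_sub_smul, inner_sub_right, inner_smul_right, inner_smul_right,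
    inner_add_right, inner_add_right, real_inner_self_eq_norm_sq, real_inner_self_eq_norm_sq, hn,
    real_inner_comm v n]
  ring

/-- The unfolding identity displaying the rank deficiency: for a unit vector `n`
and vectors `v, a` with `1 + n·v ≠ 0`, writing `R̂ = ((1 − ‖v‖²)/(1 + n·v)) • n + v`,
`n·a = R̂·a + (v · (n × ((n + v) × a)))/(1 + n·v)`. -/
theorem unfolding_identity
    (n v a : EuclideanSpace ℝ (Fin 3)) (hn : ‖n‖ = 1)
    (hden : 1 + (inner ℝ n v : ℝ) ≠ 0) :
    (inner ℝ n a : ℝ) =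
      (inner ℝ (((1 - ‖v‖ ^ 2) / (1 + (inner ℝ n v : ℝ))) • n + v) a : ℝ) +
        (inner ℝ v (cross3 n (cross3 (n + v) a)) : ℝ) / (1 + (inner ℝ n v : ℝ)) := by
  rw [inner_cross3_cross3_add_of_norm_eq_one hn, inner_add_left, real_inner_smul_left]
  field_simp
  ring
end

section
/- Let k, u, F ∈ ℝ³ with k·u ≠ 0, let c ∈ ℝ, and set Λ := F + c·u. Then F = ((k·F)/(k·u))·u − (k × (u × Λ))/(k·u). -/
theorem cross3_cross3 (a b c : EuclideanSpace ℝ (Fin 3)) :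
    cross3 a (cross3 b c) = inner ℝ a c • b - inner ℝ a b • c := by
  simp only [cross3, WithLp.equiv_apply, WithLp.equiv_symm_apply,
    cross_cross_eq_smul_sub_smul', EuclideanSpace.inner_eq_star_dotProduct, star_trivial,
    dotProduct_comm (WithLp.ofLp c), WithLp.toLp_sub, WithLp.toLp_smul, WithLp.toLp_ofLp]

theorem cross3_cross3_add_smul_self (k u F : EuclideanSpace ℝ (Fin 3)) (c : ℝ) :
    cross3 k (cross3 u (F + c • u)) = inner ℝ k F • u - inner ℝ k u • F := by
  rw [cross3_cross3, inner_add_right, inner_smul_right]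
  module

/-- Abstract reconstruction formula: if `k·u ≠ 0` and `Λ = F + c • u`, then
`F = ((k·F)/(k·u)) • u − (k × (u × Λ))/(k·u)`. -/
theorem reconstruction_from_past_data
    (k u F : EuclideanSpace ℝ (Fin 3)) (c : ℝ)
    (hku : (inner ℝ k u : ℝ) ≠ 0)
    (Λ : EuclideanSpace ℝ (Fin 3)) (hΛ : Λ = F + c • u) :
    F = ((inner ℝ k F : ℝ) / (inner ℝ k u : ℝ)) • u -
        (1 / (inner ℝ k u : ℝ)) • cross3 k (cross3 u Λ) := by
  rw [hΛ, cross3_cross3_add_smul_self, smul_sub, smul_smul, smul_smul, one_div_mul_cancel hku,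
    one_smul, one_div_mul_eq_div, sub_sub_cancel]
end

section
/- Let ρ, q ∈ ℝ³ and ε, γ ∈ ℝ. Set D := 1 + ε²γ²‖q‖², B := εγ(q·ρ)/D, and C := (1 − ‖ρ‖²)/D. Then B² + C > 0 if and only if ‖ρ‖² < 1 + ε²γ²‖q‖² + ε²γ²((q·ρ)² − ‖ρ‖²‖q‖²). -/
theorem sq_div_add_div_pos_iff {K : Type*} [Field K] [LinearOrder K] [IsStrictOrderedRing K]
    {b c D : K} (hD : 0 < D) : 0 < (b / D) ^ 2 + c / D ↔ 0 < b ^ 2 + D * c := by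
  have hcombine : (b / D) ^ 2 + c / D = (b ^ 2 + D * c) / D ^ 2 := by
    field_simp
  rw [hcombine, div_pos_iff_of_pos_right (by positivity)]

/-- The extended subluminality bound of Lemma 4.2: with
`D = 1 + ε²γ²‖q‖²`, `B = εγ(q·ρ)/D` and `C = (1 − ‖ρ‖²)/D`, one has `B² + C > 0`
if and only if `‖ρ‖² < 1 + ε²γ²‖q‖² + ε²γ²((q·ρ)² − ‖ρ‖²‖q‖²)`. -/
theorem asymmetric_paraboloid_bound
    (ρ q : EuclideanSpace ℝ (Fin 3)) (ε γ : ℝ)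
    (D B C : ℝ)
    (hD : D = 1 + ε ^ 2 * γ ^ 2 * ‖q‖ ^ 2)
    (hB : B = ε * γ * (inner ℝ q ρ : ℝ) / D)
    (hC : C = (1 - ‖ρ‖ ^ 2) / D) :
    0 < B ^ 2 + C ↔
      ‖ρ‖ ^ 2 < 1 + ε ^ 2 * γ ^ 2 * ‖q‖ ^ 2 +
        ε ^ 2 * γ ^ 2 * ((inner ℝ q ρ : ℝ) ^ 2 - ‖ρ‖ ^ 2 * ‖q‖ ^ 2) := by
  have hD_pos : 0 < D := by rw [hD]; positivity
  rw [hB, hC, sq_div_add_div_pos_iff hD_pos, hD]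
  -- `(εγ (q·ρ))² + D (1 - ‖ρ‖²)` expands to the right-hand side minus `‖ρ‖²`.
  constructor <;> intro h <;> linarith
end

section
/- Let M_i, M_k > 0, let σ ∈ {−1, 1}, and let φ_i, φ_k ∈ ℝ satisfy M_i·sinh(φ_i) = −σ·cosh(φ_k)·sinh(φ_k) and M_k·sinh(φ_k) = −σ·cosh(φ_i)·sinh(φ_i). Then: (a) if σ = −1 then sinh(φ_i)·sinh(φ_k) ≥ 0 (the velocities point in the same direction: a sticky collision); (b) if σ = 1 then sinh(φ_i)·sinh(φ_k) ≤ 0 (the velocities are opposite: a mutual recoil). -/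
open Real

theorem mul_eq_div_mul_sq_of_mul_eq {M a x y : ℝ} (hM : M ≠ 0) (h : M * x = a * y) :
    x * y = a / M * y ^ 2 := by
  field_simp
  linear_combination y * h

theorem symmetric_collision_eps_zero_general
    (Mi σ φi φk : ℝ) (hMi : 0 < Mi)
    (h1 : Mi * sinh φi = -σ * cosh φk * sinh φk) :
    (σ = -1 → 0 ≤ sinh φi * sinh φk) ∧
    (σ = 1 → sinh φi * sinh φk ≤ 0) := by
  have key := mul_eq_div_mul_sq_of_mul_eq hMi.ne' h1
  have hcosh := (cosh_pos φk).le
  constructor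
  · rintro rfl
    rw [key]
    exact mul_nonneg (div_nonneg (by simpa using hcosh) hMi.le) (sq_nonneg _)
  · rintro rfl
    rw [key]
    exact mul_nonpos_of_nonpos_of_nonneg
      (div_nonpos_of_nonpos_of_nonneg (by simpa using hcosh) hMi.le) (sq_nonneg _)

/-- **Lemma 5.1** (symmetric collisions of pure electrodynamics): if the scaled
masses `M_i, M_k > 0` and the charge product `σ = ±1` satisfy the symmetric
Weierstrass–Erdmann conditions `M_i sinh φ_i = −σ cosh φ_k sinh φ_k` and
`M_k sinh φ_k = −σ cosh φ_i sinh φ_i`, then the collision is sticky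
(`sinh φ_i · sinh φ_k ≥ 0`) in the attractive case `σ = −1`, and a mutual recoil
(`sinh φ_i · sinh φ_k ≤ 0`) in the repulsive case `σ = 1`. -/
theorem symmetric_collision_eps_zero
    (Mi Mk σ φi φk : ℝ) (hMi : 0 < Mi) (hMk : 0 < Mk)
    (hσ : σ = -1 ∨ σ = 1)
    (h1 : Mi * sinh φi = -σ * cosh φk * sinh φk)
    (h2 : Mk * sinh φk = -σ * cosh φi * sinh φi) :
    (σ = -1 → 0 ≤ sinh φi * sinh φk) ∧
    (σ = 1 → sinh φi * sinh φk ≤ 0) :=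
  symmetric_collision_eps_zero_general Mi σ φi φk hMi h1
end

section
/- Let M_i, M_k > 0, let σ ∈ {−1, 1}, and let φ_i, φ_k ∈ ℝ with sinh(φ_k) ≠ 0 satisfy M_i·sinh(φ_i) = −σ·cosh(φ_k)·sinh(φ_k) and M_k·sinh(φ_k) = −σ·cosh(φ_i)·sinh(φ_i). Then M_i·cosh(φ_i)·(cosh(φ_i)² − 1) = M_k·cosh(φ_k)·(cosh(φ_k)² − 1). -/
open Real

theorem mul_mul_sq_eq_of_cross_relations {R : Type*} [CommRing R] {a b t u v x y : R}
    (h1 : a * x = t * v * y) (h2 : b * y = t * u * x) :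
    a * u * x ^ 2 = b * v * y ^ 2 := by
  linear_combination u * x * h1 - v * y * h2

theorem symmetric_collision_cubic_general
    (Mi Mk σ φi φk : ℝ)
    (h1 : Mi * sinh φi = -σ * cosh φk * sinh φk)
    (h2 : Mk * sinh φk = -σ * cosh φi * sinh φi) :
    Mi * cosh φi * (cosh φi ^ 2 - 1) = Mk * cosh φk * (cosh φk ^ 2 - 1) := by
  simp only [cosh_sq, add_sub_cancel_right]
  exact mul_mul_sq_eq_of_cross_relations h1 h2

/-- The cubic relation `M_i γ_i(γ_i² − 1) = M_k γ_k(γ_k² − 1)` from the proof of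
Lemma 5.1, with `γ_α = cosh φ_α`. -/
theorem symmetric_collision_cubic
    (Mi Mk σ φi φk : ℝ) (hMi : 0 < Mi) (hMk : 0 < Mk)
    (hσ : σ = -1 ∨ σ = 1) (hk : sinh φk ≠ 0)
    (h1 : Mi * sinh φi = -σ * cosh φk * sinh φk)
    (h2 : Mk * sinh φk = -σ * cosh φi * sinh φi) :
    Mi * cosh φi * (cosh φi ^ 2 - 1) = Mk * cosh φk * (cosh φk ^ 2 - 1) :=
  symmetric_collision_cubic_general Mi Mk σ φi φk h1 h2
end

section
/- Let M_i, M_k > 0 and let ε ∈ ℝ with |ε| < 2. Suppose φ_i, φ_k ∈ ℝ satisfy (M_i + (ε/2)·cosh(φ_k))·sinh(φ_i) = (cosh(φ_k) − (ε/2)·cosh(φ_i))·sinh(φ_k) and (M_k + (ε/2)·cosh(φ_i))·sinh(φ_k) = (cosh(φ_i) − (ε/2)·cosh(φ_k))·sinh(φ_i). Then sinh(φ_i)·sinh(φ_k) ≥ 0 (the collision is sticky, not a mutual recoil). -/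
/-!
Multiplying both continuity conditions by `sinh φk` and subtracting eliminates `ε`, leaving
`(Mi + cosh φi) * (sinh φi * sinh φk) = (Mk + cosh φk) * sinh φk ^ 2`,
whose coefficients are positive.
-/

open Real

theorem add_mul_mul_eq_add_mul_sq_of_symmetric_collision {R : Type*} [CommRing R]
    {M N a b c s t : R}
    (h1 : (M + c * b) * s = (b - c * a) * t) (h2 : (N + c * a) * t = (a - c * b) * s) :
    (M + a) * (s * t) = (N + b) * t ^ 2 := by
  linear_combination t * h1 - t * h2

theorem mul_nonneg_of_symmetric_collision {K : Type*} [CommRing K] [LinearOrder K]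
    [IsStrictOrderedRing K] {M N a b c s t : K} (ha : 0 < M + a) (hb : 0 ≤ N + b)
    (h1 : (M + c * b) * s = (b - c * a) * t) (h2 : (N + c * a) * t = (a - c * b) * s) :
    0 ≤ s * t := by
  have h := add_mul_mul_eq_add_mul_sq_of_symmetric_collision h1 h2
  exact (mul_nonneg_iff_of_pos_left ha).mp (h ▸ by positivity)

theorem ep_symmetric_collision_sticky_general
    (Mi Mk ε φi φk : ℝ) (hMi : 0 < Mi) (hMk : 0 < Mk)
    (h1 : (Mi + ε / 2 * cosh φk) * sinh φi = (cosh φk - ε / 2 * cosh φi) * sinh φk)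
    (h2 : (Mk + ε / 2 * cosh φi) * sinh φk = (cosh φi - ε / 2 * cosh φk) * sinh φi) :
    0 ≤ sinh φi * sinh φk :=
  mul_nonneg_of_symmetric_collision (by positivity) (by positivity) h1 h2

/-- **Lemma 5.2** (electron–proton symmetric collision of ε-strong
electrodynamics): for scaled masses `M_i, M_k > 0` and `|ε| < 2`, solutions of the
symmetric Weierstrass–Erdmann conditions in the attractive case satisfy
`sinh φ_i · sinh φ_k ≥ 0`, i.e. the collision is sticky. -/
theorem ep_symmetric_collision_sticky
    (Mi Mk ε φi φk : ℝ) (hMi : 0 < Mi) (hMk : 0 < Mk) (hε : |ε| < 2)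
    (h1 : (Mi + ε / 2 * cosh φk) * sinh φi = (cosh φk - ε / 2 * cosh φi) * sinh φk)
    (h2 : (Mk + ε / 2 * cosh φi) * sinh φk = (cosh φi - ε / 2 * cosh φk) * sinh φi) :
    0 ≤ sinh φi * sinh φk :=
  ep_symmetric_collision_sticky_general Mi Mk ε φi φk hMi hMk h1 h2
end

section
/- Let M_i, M_k > 0 and ε ∈ ℝ, and suppose φ_i, φ_k ∈ ℝ with sinh(φ_i)·sinh(φ_k) ≠ 0 satisfy (M_i + (ε/2)·cosh(φ_k))·sinh(φ_i) = (cosh(φ_k) − (ε/2)·cosh(φ_i))·sinh(φ_k) and (M_k + (ε/2)·cosh(φ_i))·sinh(φ_k) = (cosh(φ_i) − (ε/2)·cosh(φ_k))·sinh(φ_i). Then cosh(φ_i)·cosh(φ_k) = M_i·M_k + (ε/2)·(M_i·cosh(φ_i) + M_k·cosh(φ_k)) + (ε/2)·(cosh(φ_i)² + cosh(φ_k)²). -/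
open Real

theorem mul_eq_mul_of_mul_eq_mul_of_mul_ne_zero {R : Type*} [CommMonoidWithZero R]
    [IsRightCancelMulZero R] {a b c d x y : R} (hxy : x * y ≠ 0) (h₁ : a * x = b * y) (h₂ : c * y = d * x) :
    a * c = b * d :=
  mul_right_cancel₀ hxy <| calc
    a * c * (x * y) = a * x * (c * y) := mul_mul_mul_comm a c x y
    _ = b * y * (d * x) := by rw [h₁, h₂]
    _ = b * d * (x * y) := by rw [mul_mul_mul_comm, mul_comm y x]

theorem ep_symmetric_collision_determinant_general
    (Mi Mk ε φi φk : ℝ)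
    (hnz : sinh φi * sinh φk ≠ 0)
    (h1 : (Mi + ε / 2 * cosh φk) * sinh φi = (cosh φk - ε / 2 * cosh φi) * sinh φk)
    (h2 : (Mk + ε / 2 * cosh φi) * sinh φk = (cosh φi - ε / 2 * cosh φk) * sinh φi) :
    cosh φi * cosh φk =
      Mi * Mk + ε / 2 * (Mi * cosh φi + Mk * cosh φk) +
        ε / 2 * (cosh φi ^ 2 + cosh φk ^ 2) := by
  have hdet := mul_eq_mul_of_mul_eq_mul_of_mul_ne_zero hnz h1 h2
  -- expanding `hdet`, the `(ε/2)² γ_i γ_k` terms on both sides cancel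
  linear_combination -hdet

/-- The vanishing-determinant condition from the proof of Lemma 5.2: a nontrivial
solution of the symmetric-collision equations of ε-strong electrodynamics
(attractive case) forces
`γ_i γ_k = M_i M_k + (ε/2)(M_i γ_i + M_k γ_k) + (ε/2)(γ_i² + γ_k²)`,
with `γ_α = cosh φ_α`. -/
theorem ep_symmetric_collision_determinant
    (Mi Mk ε φi φk : ℝ) (hMi : 0 < Mi) (hMk : 0 < Mk)
    (hnz : sinh φi * sinh φk ≠ 0)
    (h1 : (Mi + ε / 2 * cosh φk) * sinh φi = (cosh φk - ε / 2 * cosh φi) * sinh φk)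
    (h2 : (Mk + ε / 2 * cosh φi) * sinh φk = (cosh φi - ε / 2 * cosh φk) * sinh φi) :
    cosh φi * cosh φk =
      Mi * Mk + ε / 2 * (Mi * cosh φi + Mk * cosh φk) +
        ε / 2 * (cosh φi ^ 2 + cosh φk ^ 2) :=
  ep_symmetric_collision_determinant_general Mi Mk ε φi φk hnz h1 h2
end

section
/- Let M_i, M_k > 0 and ε > 0, and suppose φ_i, φ_k ∈ ℝ with sinh(φ_k) ≠ 0 satisfy (M_i + (ε/2)·cosh(φ_k))·sinh(φ_i) = −(cosh(φ_k) + (ε/2)·cosh(φ_i))·sinh(φ_k) and (M_k + (ε/2)·cosh(φ_i))·sinh(φ_k) = −(cosh(φ_i) + (ε/2)·cosh(φ_k))·sinh(φ_i). Then sinh(φ_i)·sinh(φ_k) < 0 (the collision is a mutual recoil). -/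
open Real

theorem mul_neg_of_mul_eq_neg_mul {α : Type*} [Ring α] [LinearOrder α] [IsStrictOrderedRing α]
    {a b x y : α} (ha : 0 < a) (hb : 0 < b) (hy : y ≠ 0) (h : a * x = -b * y) :
    x * y < 0 := by
  have hprod : a * (x * y) < 0 := by
    rw [← mul_assoc, h, neg_mul, neg_mul, mul_assoc, neg_lt_zero]
    exact mul_pos hb (mul_self_pos.mpr hy)
  exact neg_of_mul_neg_right hprod ha.le

theorem ee_symmetric_collision_recoil_general
    (Mi ε φi φk : ℝ) (hMi : 0 < Mi) (hε : 0 < ε)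
    (hk : sinh φk ≠ 0)
    (h1 : (Mi + ε / 2 * cosh φk) * sinh φi = -(cosh φk + ε / 2 * cosh φi) * sinh φk) :
    sinh φi * sinh φk < 0 :=
  mul_neg_of_mul_eq_neg_mul (by positivity) (by positivity) hk h1

/-- **Lemma 5.3**, case `ε > 0` (electron–electron symmetric collision of
ε-strong electrodynamics): for scaled masses `M_i, M_k > 0` and `ε > 0`,
nontrivial solutions of the symmetric Weierstrass–Erdmann conditions in the
repulsive case satisfy `sinh φ_i · sinh φ_k < 0`, i.e. the collision is a mutual
recoil. -/
theorem ee_symmetric_collision_recoil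
    (Mi Mk ε φi φk : ℝ) (hMi : 0 < Mi) (hMk : 0 < Mk) (hε : 0 < ε)
    (hk : sinh φk ≠ 0)
    (h1 : (Mi + ε / 2 * cosh φk) * sinh φi = -(cosh φk + ε / 2 * cosh φi) * sinh φk)
    (h2 : (Mk + ε / 2 * cosh φi) * sinh φk = -(cosh φi + ε / 2 * cosh φk) * sinh φi) :
    sinh φi * sinh φk < 0 :=
  ee_symmetric_collision_recoil_general Mi ε φi φk hMi hε hk h1
end
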